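/- Let (Y_1,X_1),…,(Y_n,X_n) be i.i.d. with law P on {0,1}×ℝ^p, let g be a classifier and α ∈ (0,1) a trimming level. Then R_α(g) ≤ E[R_{n,α}(g)], i.e. the empirical trimmed classification error is, in expectation, at least the trimmed classification error. -/

import Mathlib

/-!
Reweighting `P` by a density bounded by `1 / (1 - α)` that removes as much mass as possible
from the misclassification event shows `R_α(g) ≤ (R(g) - α)₊ / (1 - α)`. Each indicator
`1{g(X_i) ≠ Y_i}` has mean `R(g)`, so `E[R_n(g)] = R(g)`, and since `t ↦ (t - α)₊` is convex,
Jensen's inequality gives `(R(g) - α)₊ ≤ E[(R_n(g) - α)₊]`.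
-/

open MeasureTheory ProbabilityTheory

noncomputable section

/-- The classification error `R(g) = P({(y,x) : g(x) ≠ y})`. -/
def classErr {p : ℕ} (P : Measure (Bool × (Fin p → ℝ))) (g : (Fin p → ℝ) → Bool) : ℝ :=
  (P {z | g z.2 ≠ z.1}).toReal

/-- The set of `α`-trimmed versions of a measure `μ`. -/
def trimmedSet {Ω : Type*} [MeasurableSpace Ω] (μ : Measure Ω) (α : ℝ) :
    Set (Measure Ω) :=
  {ν | IsProbabilityMeasure ν ∧ ν ≪ μ ∧
    ∀ᵐ z ∂μ, ν.rnDeriv μ z ≤ ENNReal.ofReal (1 / (1 - α))}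

/-- The trimmed classification error `R_α(g) = inf_{Q ∈ 𝓡_α(P)} Q(g(x) ≠ y)`. -/
def trimmedErr {p : ℕ} (P : Measure (Bool × (Fin p → ℝ))) (α : ℝ)
    (g : (Fin p → ℝ) → Bool) : ℝ :=
  sInf ((fun Q => (Q {z | g z.2 ≠ z.1}).toReal) '' trimmedSet P α)

/-- Empirical classification error `R_n(g) = (1/n) Σ_i 1{g(X_i) ≠ Y_i}`. -/
def empErr {p : ℕ} (n : ℕ) (ξ : Fin n → Bool × (Fin p → ℝ))
    (g : (Fin p → ℝ) → Bool) : ℝ :=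
  (1 / n) * ∑ i, if g (ξ i).2 ≠ (ξ i).1 then (1 : ℝ) else 0

open scoped ENNReal

/-- If `r ≤ α` all of `A` can be trimmed away; otherwise `Aᶜ` keeps the largest admissible
weight `1 / (1 - α)` and `A` carries the remaining mass. -/
lemma exists_trimming_weights {r α : ℝ} (hα0 : 0 ≤ α) (hα1 : α < 1) :
    ∃ a b : ℝ, 0 ≤ a ∧ a ≤ 1 / (1 - α) ∧ 0 ≤ b ∧ b ≤ 1 / (1 - α) ∧
      a * r + b * (1 - r) = 1 ∧ a * r = max (r - α) 0 / (1 - α) := by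
  have hα : 0 < 1 - α := by linarith
  rcases le_or_gt r α with hrα | hαr
  · have hr : 0 < 1 - r := by linarith
    refine ⟨0, 1 / (1 - r), le_rfl, by positivity, by positivity,
      one_div_le_one_div_of_le hα (by linarith), by field_simp; ring, ?_⟩
    rw [max_eq_right (by linarith)]
    simp
  · have hr : 0 < r := hα0.trans_lt hαr
    refine ⟨(r - α) / (r * (1 - α)), 1 / (1 - α), by positivity, ?_, by positivity, le_rfl,
      by field_simp; ring, by rw [max_eq_left (by linarith)]; field_simp⟩
    rw [div_le_div_iff₀ (by positivity) hα]
    nlinarith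

section General

variable {Ω : Type*} [MeasurableSpace Ω] {μ : Measure Ω}

lemma withDensity_mem_trimmedSet [SigmaFinite μ] {α : ℝ} {f : Ω → ℝ≥0∞} (hf : Measurable f)
    (hf_one : ∫⁻ z, f z ∂μ = 1) (hf_le : ∀ z, f z ≤ ENNReal.ofReal (1 / (1 - α))) :
    μ.withDensity f ∈ trimmedSet μ α := by
  refine ⟨⟨?_⟩, withDensity_absolutelyContinuous μ f, ?_⟩
  · rw [withDensity_apply _ MeasurableSet.univ, Measure.restrict_univ, hf_one]
  · filter_upwards [Measure.rnDeriv_withDensity μ hf] with z hz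
    exact hz ▸ hf_le z

lemma exists_mem_trimmedSet_measureReal_eq [IsProbabilityMeasure μ] {α : ℝ} {A : Set Ω}
    (hA : MeasurableSet A) (hα0 : 0 ≤ α) (hα1 : α < 1) :
    ∃ ν ∈ trimmedSet μ α, ν.real A = max (μ.real A - α) 0 / (1 - α) := by
  obtain ⟨a, b, ha0, ha, hb0, hb, h_total, h_A⟩ :=
    exists_trimming_weights (r := μ.real A) hα0 hα1
  classical
  set f := A.piecewise (fun _ => ENNReal.ofReal a) (fun _ => ENNReal.ofReal b)
  have hf : Measurable f := measurable_const.piecewise hA measurable_const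
  refine ⟨μ.withDensity f, withDensity_mem_trimmedSet hf ?_ fun z => ?_, ?_⟩
  · rw [lintegral_piecewise hA, setLIntegral_const, setLIntegral_const, ← ofReal_measureReal,
      ← ofReal_measureReal, ← ENNReal.ofReal_mul ha0, ← ENNReal.ofReal_mul hb0,
      ← ENNReal.ofReal_add (by positivity) (by positivity), probReal_compl_eq_one_sub hA,
      h_total, ENNReal.ofReal_one]
  · by_cases hz : z ∈ A
    · simpa [f, hz] using ENNReal.ofReal_le_ofReal ha
    · simpa [f, hz] using ENNReal.ofReal_le_ofReal hb
  · rw [measureReal_def, withDensity_apply _ hA,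
      setLIntegral_congr_fun hA fun z hz => Set.piecewise_eq_of_mem A _ _ hz, setLIntegral_const,
      ← ofReal_measureReal, ← ENNReal.ofReal_mul ha0, ENNReal.toReal_ofReal (by positivity), h_A]

lemma max_integral_sub_le_integral_max_sub [IsProbabilityMeasure μ] {f : Ω → ℝ}
    (hf : Integrable f μ) (c : ℝ) :
    max (∫ ω, f ω ∂μ - c) 0 ≤ ∫ ω, max (f ω - c) 0 ∂μ := by
  have hf_sub : Integrable (fun ω => f ω - c) μ := hf.sub (integrable_const c)
  refine max_le ?_ (integral_nonneg fun ω => le_max_right _ _)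
  calc ∫ ω, f ω ∂μ - c = ∫ ω, f ω - c ∂μ := by
        rw [integral_sub hf (integrable_const c), integral_const, probReal_univ, one_smul]
    _ ≤ ∫ ω, max (f ω - c) 0 ∂μ :=
        integral_mono hf_sub hf_sub.pos_part fun ω => le_max_left _ _

variable {E : Type*} [MeasurableSpace E] {P : Measure E} {X : Ω → E} {A : Set E}

lemma integrable_indicator_one_comp [IsFiniteMeasure P] (hX : Measurable X)
    (hlaw : μ.map X = P) (hA : MeasurableSet A) :
    Integrable (fun ω => A.indicator (1 : E → ℝ) (X ω)) μ := by
  refine Integrable.comp_measurable (g := A.indicator 1) ?_ hX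
  rw [hlaw]
  exact (integrable_const 1).indicator hA

lemma integral_indicator_one_comp (hX : Measurable X) (hlaw : μ.map X = P)
    (hA : MeasurableSet A) :
    ∫ ω, A.indicator (1 : E → ℝ) (X ω) ∂μ = P.real A := by
  rw [← integral_map hX.aemeasurable (stronglyMeasurable_one.indicator hA).aestronglyMeasurable,
    hlaw, integral_indicator_one hA]

end General

section Classification

variable {p : ℕ}

def misclassified (g : (Fin p → ℝ) → Bool) : Set (Bool × (Fin p → ℝ)) := {z | g z.2 ≠ z.1}

lemma measurableSet_misclassified {g : (Fin p → ℝ) → Bool} (hg : Measurable g) :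
    MeasurableSet (misclassified g) :=
  (measurableSet_eq_fun (hg.comp measurable_snd) measurable_fst).compl

lemma trimmedErr_le_of_mem {P : Measure (Bool × (Fin p → ℝ))} {α : ℝ} {Q : Measure _}
    (hQ : Q ∈ trimmedSet P α) (g : (Fin p → ℝ) → Bool) :
    trimmedErr P α g ≤ Q.real (misclassified g) :=
  csInf_le ⟨0, by rintro _ ⟨Q', -, rfl⟩; exact ENNReal.toReal_nonneg⟩ ⟨Q, hQ, rfl⟩

lemma trimmedErr_le_max_classErr_sub_div (P : Measure (Bool × (Fin p → ℝ)))
    [IsProbabilityMeasure P] {α : ℝ} (hα0 : 0 ≤ α) (hα1 : α < 1) {g : (Fin p → ℝ) → Bool}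
    (hg : Measurable g) :
    trimmedErr P α g ≤ max (classErr P g - α) 0 / (1 - α) := by
  obtain ⟨Q, hQ, hQ_eq⟩ :=
    exists_mem_trimmedSet_measureReal_eq (μ := P) (measurableSet_misclassified hg) hα0 hα1
  exact (trimmedErr_le_of_mem hQ g).trans_eq hQ_eq

lemma empErr_eq_mean_indicator (n : ℕ) (z : Fin n → Bool × (Fin p → ℝ))
    (g : (Fin p → ℝ) → Bool) :
    empErr n z g = (1 / n) * ∑ i, (misclassified g).indicator 1 (z i) := by
  simp [empErr, misclassified, Set.indicator_apply]

variable {Ω : Type*} [MeasurableSpace Ω] {μ : Measure Ω} {P : Measure (Bool × (Fin p → ℝ))}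
  {g : (Fin p → ℝ) → Bool} {n : ℕ} {ξ : Fin n → Ω → Bool × (Fin p → ℝ)}

lemma integrable_empErr [IsFiniteMeasure P] (hg : Measurable g) (hmeas : ∀ i, Measurable (ξ i))
    (hlaw : ∀ i, μ.map (ξ i) = P) :
    Integrable (fun ω => empErr n (fun i => ξ i ω) g) μ := by
  simp_rw [empErr_eq_mean_indicator]
  exact (integrable_finsetSum _ fun i _ =>
    integrable_indicator_one_comp (hmeas i) (hlaw i) (measurableSet_misclassified hg)).const_mul _

lemma integral_empErr [IsFiniteMeasure P] (hg : Measurable g) (hn : 0 < n)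
    (hmeas : ∀ i, Measurable (ξ i)) (hlaw : ∀ i, μ.map (ξ i) = P) :
    ∫ ω, empErr n (fun i => ξ i ω) g ∂μ = classErr P g := by
  have hA := measurableSet_misclassified hg
  simp_rw [empErr_eq_mean_indicator]
  rw [integral_const_mul, integral_finsetSum _ fun i _ =>
    integrable_indicator_one_comp (hmeas i) (hlaw i) hA]
  simp_rw [integral_indicator_one_comp (hmeas _) (hlaw _) hA]
  simp [classErr, misclassified, measureReal_def, hn.ne']

end Classification

theorem trimmedErr_le_expectation_general {p : ℕ}
    (P : Measure (Bool × (Fin p → ℝ))) [IsProbabilityMeasure P]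
    {α : ℝ} (hα : α ∈ Set.Ioo (0 : ℝ) 1)
    {g : (Fin p → ℝ) → Bool} (hg : Measurable g)
    {Ω : Type*} [MeasurableSpace Ω] (μ : Measure Ω) [IsProbabilityMeasure μ]
    {n : ℕ} (hn : 0 < n) (ξ : Fin n → Ω → Bool × (Fin p → ℝ))
    (hmeas : ∀ i, Measurable (ξ i))
    (hlaw : ∀ i, μ.map (ξ i) = P) :
    trimmedErr P α g ≤
      ∫ ω, max (empErr n (fun i => ξ i ω) g - α) 0 / (1 - α) ∂μ := by
  obtain ⟨hα0, hα1⟩ := hα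
  calc trimmedErr P α g ≤ max (classErr P g - α) 0 / (1 - α) :=
        trimmedErr_le_max_classErr_sub_div P hα0.le hα1 hg
    _ = max (∫ ω, empErr n (fun i => ξ i ω) g ∂μ - α) 0 / (1 - α) := by
        rw [integral_empErr hg hn hmeas hlaw]
    _ ≤ (∫ ω, max (empErr n (fun i => ξ i ω) g - α) 0 ∂μ) / (1 - α) := by
        gcongr
        exact max_integral_sub_le_integral_max_sub (integrable_empErr hg hmeas hlaw) α
    _ = ∫ ω, max (empErr n (fun i => ξ i ω) g - α) 0 / (1 - α) ∂μ := (integral_div _ _).symm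

/-- For an i.i.d. sample with law `P`, the expected empirical trimmed error
`E[R_{n,α}(g)] = E[(R_n(g) − α)_+/(1−α)]` is at least the trimmed error `R_α(g)`. -/
theorem trimmedErr_le_expectation {p : ℕ}
    (P : Measure (Bool × (Fin p → ℝ))) [IsProbabilityMeasure P]
    {α : ℝ} (hα : α ∈ Set.Ioo (0 : ℝ) 1)
    {g : (Fin p → ℝ) → Bool} (hg : Measurable g)
    {Ω : Type*} [MeasurableSpace Ω] (μ : Measure Ω) [IsProbabilityMeasure μ]
    {n : ℕ} (hn : 0 < n) (ξ : Fin n → Ω → Bool × (Fin p → ℝ))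
    (hmeas : ∀ i, Measurable (ξ i))
    (hindep : iIndepFun ξ μ)
    (hlaw : ∀ i, μ.map (ξ i) = P) :
    trimmedErr P α g ≤
      ∫ ω, max (empErr n (fun i => ξ i ω) g - α) 0 / (1 - α) ∂μ :=
  trimmedErr_le_expectation_general P hα hg μ hn ξ hmeas hlaw

end
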